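/- The relation ≥ on resource terms defined by t ≥ s iff there is a resource reduction t →* a with s ∈ supp(a) is a partial order (reflexive, transitive, and antisymmetric), assuming the resource reduction → is strongly normalizing. -/
import Mathlib


inductive RT : Type
  | var : ℕ → RT
  | abs : ℕ → RT → RT
  | app : RT → List RT → RT

def RT.size : RT → ℕ
  | .var _ => 1
  | .abs _ t => 1 + t.size
  | .app t l => 1 + t.size + (l.attach.map (fun s => s.1.size)).sum
decreasing_by
  all_goals simp_wf
  all_goals try omega
  all_goals (have := List.sizeOf_lt_of_mem s.2; omega)

def RT.height : RT → ℕ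
  | .var _ => 1
  | .abs _ t => 1 + t.height
  | .app t l => 1 + (l.attach.map (fun s => s.1.height)).foldr max t.height
decreasing_by
  all_goals simp_wf
  all_goals try omega
  all_goals (have := List.sizeOf_lt_of_mem s.2; omega)

/-- `RT.Free x s`: the variable `x` occurs free in the resource term `s`. -/
inductive RT.Free (x : ℕ) : RT → Prop
  | var : RT.Free x (.var x)
  | abs {y t} : y ≠ x → RT.Free x t → RT.Free x (.abs y t)
  | appFun {t l} : RT.Free x t → RT.Free x (.app t l)
  | appArg {t l u} : u ∈ l → RT.Free x u → RT.Free x (.app t l)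

/-- A resource term is linear when every bag occurring in it has cardinality 1. -/
inductive RT.Linear : RT → Prop
  | var {x} : RT.Linear (.var x)
  | abs {x t} : RT.Linear t → RT.Linear (.abs x t)
  | app {t u} : RT.Linear t → RT.Linear u → RT.Linear (.app t [u])

/-- `RT.BagIn b s`: the bag `b` occurs in the resource term `s`. -/
inductive RT.BagIn (b : List RT) : RT → Prop
  | here {t} : RT.BagIn b (.app t b)
  | abs {y t} : RT.BagIn b t → RT.BagIn b (.abs y t)
  | appFun {t l} : RT.BagIn b t → RT.BagIn b (.app t l)
  | appArg {t l u} : u ∈ l → RT.BagIn b u → RT.BagIn b (.app t l)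

/-- A set of resource terms is bounded when some `n` bounds the cardinality of all
bags occurring in all of its terms. -/
def RT.BoundedSet (a : Set RT) : Prop :=
  ∃ n : ℕ, ∀ s ∈ a, ∀ b : List RT, RT.BagIn b s → b.length ≤ n

/-- The structure of all sets of linear resource terms. -/
def linStructure : Set (Set RT) := {a | ∀ s ∈ a, RT.Linear s}

/-- The structure of all bounded sets of resource terms. -/
def bddStructure : Set (Set RT) := {a | RT.BoundedSet a}

mutual
  /-- Differential (linear) substitution, as a relation: `DSub x t b t'` means that
  `t'` is one of the summands of `t⟨b/x⟩`, i.e. `t'` is obtained from `t` by replacing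
  the free occurrences of `x` by the elements of the bag `b`, each element being used
  exactly once (the relation is empty if the number of free occurrences of `x` in `t`
  differs from the cardinality of `b`). -/
  inductive DSub (x : ℕ) : RT → List RT → RT → Prop
    | varEq {u} : DSub x (.var x) [u] u
    | varNe {y} : y ≠ x → DSub x (.var y) [] (.var y)
    | abs {y t b t'} : y ≠ x → DSub x t b t' → DSub x (.abs y t) b (.abs y t')
    | app {t b t' l c l'} : DSub x t b t' → DSubs x l c l' →
        DSub x (.app t l) (b ++ c) (.app t' l')
  /-- Pointwise extension of differential substitution to bags. -/
  inductive DSubs (x : ℕ) : List RT → List RT → List RT → Prop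
    | nil : DSubs x [] [] []
    | cons {t b t' l c l'} : DSub x t b t' → DSubs x l c l' →
        DSubs x (t :: l) (b ++ c) (t' :: l')
end

/-- One step of resource reduction at the level of supports: `RT.Step s t` holds when
`t` belongs to the support of a one-step resource reduct of `s`.  In the redex case,
the bag is distributed among the free occurrences of the substituted variable in all
possible ways (whence the permutation). -/
inductive RT.Step : RT → RT → Prop
  | redex {x t b b' t'} : b.Perm b' → DSub x t b t' → RT.Step (.app (.abs x t) b') t'
  | abs {y t t'} : RT.Step t t' → RT.Step (.abs y t) (.abs y t')
  | appFun {t t' l} : RT.Step t t' → RT.Step (.app t l) (.app t' l)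
  | appArg {t u u' l₁ l₂} : RT.Step u u' →
      RT.Step (.app t (l₁ ++ u :: l₂)) (.app t (l₁ ++ u' :: l₂))

/-- `RT.Red s t` (written `s ⊵ t` in the paper): `t` belongs to the support of some
multistep resource reduct of `s`. -/
def RT.Red : RT → RT → Prop := Relation.ReflTransGen RT.Step

/-- The cone of antireduction over a set `a` of resource terms. -/
def cone (a : Set RT) : Set RT := {t | ∃ s ∈ a, RT.Red t s}

/-- Cones of the members of a structure. -/
def cones (T : Set (Set RT)) : Set (Set RT) := {c | ∃ a ∈ T, c = cone a}

/-- The dual of a structure: sets having finite intersection with every member. -/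
def dualS {A : Type*} (𝔄 : Set (Set A)) : Set (Set A) :=
  {b | ∀ a ∈ 𝔄, (b ∩ a).Finite}

/-- Non-deterministic λ-terms. -/
inductive Lam : Type
  | var : ℕ → Lam
  | abs : ℕ → Lam → Lam
  | app : Lam → Lam → Lam
  | add : Lam → Lam → Lam

/-- Substitution of a λ-term for a variable (naive, capture is not avoided). -/
def Lam.subst : Lam → ℕ → Lam → Lam
  | .var y, x, N => if y = x then N else .var y
  | .abs y M, x, N => if y = x then .abs y M else .abs y (M.subst x N)
  | .app M P, x, N => .app (M.subst x N) (P.subst x N)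
  | .add M P, x, N => .add (M.subst x N) (P.subst x N)

/-- β-reduction on non-deterministic λ-terms (contextual closure of the β-rule). -/
inductive Lam.Beta : Lam → Lam → Prop
  | beta {x M N} : Lam.Beta (.app (.abs x M) N) (M.subst x N)
  | abs {x M M'} : Lam.Beta M M' → Lam.Beta (.abs x M) (.abs x M')
  | appL {M M' N} : Lam.Beta M M' → Lam.Beta (.app M N) (.app M' N)
  | appR {M N N'} : Lam.Beta N N' → Lam.Beta (.app M N) (.app M N')
  | addL {M M' N} : Lam.Beta M M' → Lam.Beta (.add M N) (.add M' N)
  | addR {M N N'} : Lam.Beta N N' → Lam.Beta (.add M N) (.add M N')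

/-- One step of "loss of addenda": generators of the order `⊒`. -/
inductive Lam.Drop : Lam → Lam → Prop
  | addL {M N} : Lam.Drop (.add M N) M
  | addR {M N} : Lam.Drop (.add M N) N
  | abs {x M M'} : Lam.Drop M M' → Lam.Drop (.abs x M) (.abs x M')
  | appL {M M' N} : Lam.Drop M M' → Lam.Drop (.app M N) (.app M' N)
  | appR {M N N'} : Lam.Drop N N' → Lam.Drop (.app M N) (.app M N')
  | addCL {M M' N} : Lam.Drop M M' → Lam.Drop (.add M N) (.add M' N)
  | addCR {M N N'} : Lam.Drop N N' → Lam.Drop (.add M N) (.add M N')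

/-- The order `M ⊒ N`: the least partial order compatible with the constructors such
that `M + N ⊒ M` and `M + N ⊒ N`. -/
def Lam.Ge : Lam → Lam → Prop := Relation.ReflTransGen Lam.Drop

/-- Partial reduction `M ⊳ N`: one β-step followed by a possible loss of addenda. -/
def Lam.PRed (M N : Lam) : Prop := ∃ P, Lam.Beta M P ∧ Lam.Ge P N

/-- Partial reduction at top level. -/
def Lam.PRedTop (M N : Lam) : Prop :=
  ∃ x M' M'', M = .app (.abs x M') M'' ∧ Lam.Ge (M'.subst x M'') N

/-- The support of the Taylor expansion of a non-deterministic λ-term. -/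
def Lam.taylor : Lam → Set RT
  | .var x => {.var x}
  | .abs x M => {t | ∃ s ∈ M.taylor, t = .abs x s}
  | .app M N => {t | ∃ s ∈ M.taylor, ∃ l : List RT, (∀ u ∈ l, u ∈ N.taylor) ∧ t = .app s l}
  | .add M N => M.taylor ∪ N.taylor

/-- The linear part `ℓ(M)` of the support of the Taylor expansion. -/
def Lam.lin : Lam → Set RT
  | .var x => {.var x}
  | .abs x M => {t | ∃ s ∈ M.lin, t = .abs x s}
  | .app M N => {t | ∃ s ∈ M.lin, ∃ u ∈ N.lin, t = .app s [u]}
  | .add M N => M.lin ∪ N.lin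

/-- Types of System 𝒟₊. -/
inductive Ty : Type
  | var : ℕ → Ty
  | arrow : Ty → Ty → Ty
  | inter : Ty → Ty → Ty

/-- Subtyping, generated by intersection elimination, the arrow rule, and
distribution of intersection over arrows (closed under reflexivity and
transitivity). -/
inductive Ty.Sub : Ty → Ty → Prop
  | refl {A} : Ty.Sub A A
  | trans {A B C} : Ty.Sub A B → Ty.Sub B C → Ty.Sub A C
  | interL {A B} : Ty.Sub (.inter A B) A
  | interR {A B} : Ty.Sub (.inter A B) B
  | arrow {A A' B B'} : Ty.Sub A' A → Ty.Sub B B' → Ty.Sub (.arrow A B) (.arrow A' B')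
  | dist {A B C} : Ty.Sub (.inter (.arrow A B) (.arrow A C)) (.arrow A (.inter B C))

/-- Typing contexts. -/
abbrev Ctx : Type := List (ℕ × Ty)

/-- Typing derivations of System 𝒟₊. -/
inductive Der : Ctx → Lam → Ty → Prop
  | var {Γ x A} : (x, A) ∈ Γ → Der Γ (.var x) A
  | abs {Γ x A M B} : Der ((x, A) :: Γ) M B → Der Γ (.abs x M) (.arrow A B)
  | app {Γ M N A B} : Der Γ M (.arrow A B) → Der Γ N A → Der Γ (.app M N) B
  | inter {Γ M A B} : Der Γ M A → Der Γ M B → Der Γ M (.inter A B)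
  | sum {Γ M N A} : Der Γ M A → Der Γ N A → Der Γ (.add M N) A
  | sub {Γ M A A'} : Der Γ M A → Ty.Sub A A' → Der Γ M A'

/-- Iterated application `M M₁ ⋯ Mₙ`. -/
def Lam.appList (M : Lam) (l : List Lam) : Lam := l.foldl Lam.app M

/-- Pointwise subtyping of contexts: `Γ ≤ Γ'` when every assignment `x : A'` in `Γ'`
has a corresponding assignment `x : A` in `Γ` with `A ≤ A'`. -/
def Ctx.Le (Γ Γ' : Ctx) : Prop :=
  ∀ x A', (x, A') ∈ Γ' → ∃ A, (x, A) ∈ Γ ∧ Ty.Sub A A'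

/-- The relation `s ⊵ t` (`t` occurs in the support of a multistep resource reduct of
`s`) is a partial order, assuming resource reduction is strongly normalizing. -/
theorem red_partialOrder (hSN : WellFounded (flip RT.Step)) :
    (∀ s : RT, RT.Red s s) ∧
    (∀ s t u : RT, RT.Red s t → RT.Red t u → RT.Red s u) ∧
    (∀ s t : RT, RT.Red s t → RT.Red t s → s = t) := by
  refine ⟨fun s => Relation.ReflTransGen.refl, fun s t u h1 h2 => h1.trans h2, ?_⟩
  intro s t hst hts
  rcases (Relation.reflTransGen_iff_eq_or_transGen.mp hst) with h | h
  · exact h.symm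
  rcases (Relation.reflTransGen_iff_eq_or_transGen.mp hts) with h' | h'
  · exact h'
  exact absurd ((h.trans h').swap) (hSN.transGen.isIrrefl.irrefl s)
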